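/- Let m, n be non-negative integers, let μ be an (n|m)-hook partition (μ_{n+1} ≤ m), set ν := μ' and τ_j := ν_{m+j} for j ≥ 1. Then Σ_{i=1}^{m} ν_i(ν_i − 2i) − Σ_{j=1}^{n} τ'_j(τ'_j + 2(m−j+1)) = − Σ_{i≥1} μ_i(μ_i − 2(i−1)). -/

import Mathlib

/-- A partition: a weakly decreasing, eventually zero sequence of
non-negative integers. Here `l i` denotes the part `λ_{i+1}` (0-indexed). -/
def IsPartition (l : ℕ → ℕ) : Prop :=
  Antitone l ∧ ∃ N, ∀ i, N ≤ i → l i = 0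

/-- The conjugate partition: `conj l j` is `λ'_{j+1} = #{ i ≥ 1 : λ_i ≥ j+1 }`
(0-indexed). -/
noncomputable def conj (l : ℕ → ℕ) (j : ℕ) : ℕ :=
  Set.ncard {i : ℕ | j + 1 ≤ l i}

/-!
Weight the cell `(r, c)` (row `r`, column `c`, 0-indexed) of the Young diagram of `μ` by
`2 (c - r) + 1`, i.e. twice its content plus one. Summing along row `r` gives `μ_r (μ_r - 2r)`,
and summing down column `c` gives `-ν_c (ν_c - 2(c+1))`. The conjugate of the tail
`τ_k = ν_{m+k}` is `τ'_j = μ_j - m`, so the `j`-th term of the second sum is the weight of the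
part of row `j` lying in the columns `c ≥ m`. By the hook condition `μ_n ≤ m` every cell in a
column `c ≥ m` lies in a row `r < n`, so the two sums on the left together count the weight of
every cell once: by columns for `c < m` and by rows for `c ≥ m`.
-/

open Finset

theorem sum_range_two_mul_sub_add_one (a : ℕ) (x : ℤ) :
    ∑ k ∈ range a, (2 * ((k : ℤ) - x) + 1) = a * (a - 2 * x) := by
  induction a with
  | zero => simp
  | succ a ih => rw [sum_range_succ, ih]; push_cast; ring

def cellWeight (r c : ℕ) : ℤ := 2 * ((c : ℤ) - r) + 1

theorem sum_cellWeight_row (r a : ℕ) : ∑ c ∈ range a, cellWeight r c = a * (a - 2 * r) :=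
  sum_range_two_mul_sub_add_one a r

theorem sum_cellWeight_col (c b : ℕ) :
    ∑ r ∈ range b, cellWeight r c = -(b * (b - 2 * (c + 1))) := by
  rw [← sum_range_two_mul_sub_add_one, ← sum_neg_distrib]
  exact sum_congr rfl fun r _ => by simp only [cellWeight]; ring

theorem sum_cellWeight_Ico (r m k : ℕ) :
    ∑ c ∈ Ico m k, cellWeight r c = (k - m : ℕ) * ((k - m : ℕ) + 2 * ((m : ℤ) - r)) := by
  have hshift : ((k - m : ℕ) : ℤ) + 2 * ((m : ℤ) - r) = (k - m : ℕ) - 2 * ((r : ℤ) - m) := by ring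
  rw [sum_Ico_eq_sum_range, hshift, ← sum_range_two_mul_sub_add_one]
  exact sum_congr rfl fun c _ => by simp only [cellWeight]; push_cast; ring

namespace IsPartition

variable {mu : ℕ → ℕ}

theorem lt_conj_iff (hmu : IsPartition mu) {i j : ℕ} : i < conj mu j ↔ j < mu i := by
  obtain ⟨hanti, N, hN⟩ := hmu
  have hex : ∃ k, mu k ≤ j := ⟨N, by simp [hN N le_rfl]⟩
  have hle : ∀ k, mu k ≤ j ↔ Nat.find hex ≤ k := fun k =>
    ⟨fun h => Nat.find_min' hex h, fun h => (hanti h).trans (Nat.find_spec hex)⟩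
  have hset : {i | j + 1 ≤ mu i} = Set.Iio (Nat.find hex) := by
    ext k
    rw [Set.mem_ofPred_eq, Set.mem_Iio, Nat.succ_le_iff, ← not_le, hle, not_le]
  rw [conj, hset, Set.ncard_Iio_nat, ← not_le, ← hle, not_le]

theorem conj_conj_shift (hmu : IsPartition mu) (m j : ℕ) :
    conj (fun k => conj mu (m + k)) j = mu j - m := by
  have hset : {k | j + 1 ≤ conj mu (m + k)} = Set.Iio (mu j - m) := by
    ext k
    simp only [Set.mem_ofPred_eq, Set.mem_Iio, Nat.succ_le_iff, hmu.lt_conj_iff]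
    omega
  rw [conj, hset, Set.ncard_Iio_nat]

variable {M : Type*} [AddCommMonoid M]

theorem sum_rows_eq_sum_cols (hmu : IsPartition mu) {N C : ℕ} (hN : ∀ i, N ≤ i → mu i = 0)
    (hC : mu 0 ≤ C) (g : ℕ → ℕ → M) :
    ∑ r ∈ range N, ∑ c ∈ range (mu r), g r c = ∑ c ∈ range C, ∑ r ∈ range (conj mu c), g r c :=
  sum_comm' fun r c => by
    simp only [mem_range, hmu.lt_conj_iff]
    have hrow : mu r ≤ C := (hmu.1 (Nat.zero_le r)).trans hC
    have hN' : c < mu r → r < N := fun h => by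
      by_contra! hr
      simp [hN r hr] at h
    omega

theorem sum_cols_Ico_eq_sum_rows (hmu : IsPartition mu) {m n C : ℕ} (hhook : mu n ≤ m)
    (hC : mu 0 ≤ C) (g : ℕ → ℕ → M) :
    ∑ c ∈ Ico m C, ∑ r ∈ range (conj mu c), g r c = ∑ r ∈ range n, ∑ c ∈ Ico m (mu r), g r c :=
  sum_comm' fun c r => by
    simp only [mem_range, mem_Ico, hmu.lt_conj_iff]
    have hrow : mu r ≤ C := (hmu.1 (Nat.zero_le r)).trans hC
    have hn : n ≤ r → mu r ≤ m := fun h => (hmu.1 h).trans hhook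
    omega

end IsPartition

/-- Case 3 (spo(2m|2n) versus d_∞) of Lemma 4.2.
Let μ be an (n|m)-hook partition, ν := μ', τ_j := ν_{m+j}. Then
Σ_{i=1}^{m} ν_i(ν_i − 2i) − Σ_{j=1}^{n} τ'_j(τ'_j + 2(m−j+1))
  = − Σ_{i≥1} μ_i(μ_i − 2(i−1)). -/
theorem casimir_comparison_spo_even (m n : ℕ) (mu : ℕ → ℕ)
    (hmu : IsPartition mu) (hhook : mu n ≤ m) :
    ∑ i ∈ Finset.range m,
        (conj mu i : ℤ) * ((conj mu i : ℤ) - 2 * ((i : ℤ) + 1)) -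
      ∑ j ∈ Finset.range n,
        (conj (fun k => conj mu (m + k)) j : ℤ) *
          ((conj (fun k => conj mu (m + k)) j : ℤ) + 2 * ((m : ℤ) - ((j : ℤ) + 1) + 1)) =
      - ∑ᶠ i : ℕ, (mu i : ℤ) * ((mu i : ℤ) - 2 * (i : ℤ)) := by
  obtain ⟨N, hN⟩ := hmu.2
  have hC : mu 0 ≤ max m (mu 0) := le_max_right m (mu 0)
  have hcells : ∑ r ∈ range N, ∑ c ∈ range (mu r), cellWeight r c =
      ∑ c ∈ range m, ∑ r ∈ range (conj mu c), cellWeight r c +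
        ∑ r ∈ range n, ∑ c ∈ Ico m (mu r), cellWeight r c := by
    rw [hmu.sum_rows_eq_sum_cols hN hC, ← sum_range_add_sum_Ico _ (le_max_left m (mu 0)),
      hmu.sum_cols_Ico_eq_sum_rows hhook hC]
  have hfin : ∑ᶠ i : ℕ, (mu i : ℤ) * (mu i - 2 * i) = ∑ i ∈ range N, (mu i : ℤ) * (mu i - 2 * i) :=
    finsum_eq_sum_of_support_subset _ fun i hi => by
      by_contra! hiN
      simp_all
  rw [hfin, sum_congr rfl fun r _ => (sum_cellWeight_row r (mu r)).symm, hcells]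
  simp only [sum_cellWeight_col, sum_cellWeight_Ico, hmu.conj_conj_shift, sum_neg_distrib,
    neg_add, neg_neg, ← sub_eq_add_neg]
  exact congrArg _ (sum_congr rfl fun j _ => by ring)
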